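/- The 2×2×2×2 array with entries x_{1122}=1, x_{1212}=1, x_{2112}=1, x_{1221}=1, x_{2121}=1, x_{2211}=1, x_{2222}=1 and all other entries 0 (flattened [0,0,0,1,0,1,1,0,0,1,1,0,1,0,0,1]) has Boolean rank at least 7. -/
import Mathlib


/-- The Boolean outer product of `n` vectors in `{0,1}^2` (entrywise AND). -/
noncomputable def bOuter (n : ℕ) (v : Fin n → Fin 2 → Bool) : (Fin n → Fin 2) → Bool :=
  fun i => Finset.univ.inf fun j => v j (i j)

/-- `X` is the entrywise OR of `R` Boolean outer products. -/
def bHasRankLE (n R : ℕ) (X : (Fin n → Fin 2) → Bool) : Prop :=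
  ∃ v : Fin R → Fin n → Fin 2 → Bool,
    X = fun i => Finset.univ.sup fun r => bOuter n (v r) i

/-- The Boolean rank of a `2×⋯×2` array of zeros and ones. -/
noncomputable def boolRank (n : ℕ) (X : (Fin n → Fin 2) → Bool) : ℕ :=
  sInf {R | bHasRankLE n R X}

/-- Build a `2×2×2×2` Boolean array from its flattening. -/
def bflat4 (l : Fin 16 → Bool) : (Fin 4 → Fin 2) → Bool :=
  fun i => l ⟨8 * (i 0 : ℕ) + 4 * (i 1 : ℕ) + 2 * (i 2 : ℕ) + (i 3 : ℕ), by
    have h0 := (i 0).isLt; have h1 := (i 1).isLt; have h2 := (i 2).isLt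
    have h3 := (i 3).isLt; omega⟩

/-- The concrete array of the theorem. -/
def Xb : (Fin 4 → Fin 2) → Bool := bflat4 ![false, false, false, true, false, true, true, false,
      false, true, true, false, true, false, false, true]

/-- Decoding of `Fin 16` into an index of the array. -/
def dec16 (r : Fin 16) : Fin 4 → Fin 2 := fun j =>
  ⟨(r : ℕ) / 2 ^ (3 - (j : ℕ)) % 2, Nat.mod_lt _ (by norm_num)⟩

lemma boolSup {R : ℕ} (f : Fin R → Bool) :
    (Finset.univ.sup f) = true ↔ ∃ r, f r = true := by
  constructor
  · intro h
    by_contra hc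
    push_neg at hc
    have : Finset.univ.sup f = ⊥ := (Finset.sup_eq_bot_iff f _).mpr (by
      intro r _; simpa using hc r)
    rw [h] at this; exact Bool.noConfusion this
  · rintro ⟨r, hr⟩
    have := Finset.le_sup (f := f) (Finset.mem_univ r)
    rw [hr] at this
    exact top_le_iff.mp this

lemma bOuter_true_iff (v : Fin 4 → Fin 2 → Bool) (i : Fin 4 → Fin 2) :
    bOuter 4 v i = true ↔ ∀ j, v j (i j) = true := by
  rw [bOuter, show (true : Bool) = ⊤ from rfl, Finset.inf_eq_top_iff]
  simp

/-- Flipping one coordinate of a support point leaves the support. -/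
lemma Xb_flip : ∀ i j b, Xb i = true → b ≠ i j → Xb (Function.update i j b) = false := by
  decide

lemma Xb_card : (Finset.univ.filter (fun i => Xb i = true)).card = 7 := by decide

lemma Xb_rank16 : bHasRankLE 4 16 Xb := by
  refine ⟨fun r j k => Xb (dec16 r) && decide (k = dec16 r j), ?_⟩
  decide

theorem boolean_rank_ge_seven_2222 :
    7 ≤ boolRank 4 (bflat4 ![false, false, false, true, false, true, true, false,
      false, true, true, false, true, false, false, true]) := by
  have hXb : bflat4 ![false, false, false, true, false, true, true, false,
      false, true, true, false, true, false, false, true] = Xb := rfl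
  rw [boolRank, hXb]
  refine le_csInf ⟨16, Xb_rank16⟩ ?_
  rintro R ⟨v, hv⟩
  -- every outer product contained in the support covers at most one point
  set S : Finset (Fin 4 → Fin 2) := Finset.univ.filter (fun i => Xb i = true) with hS
  -- for each point of the support pick a covering outer product
  have hcov : ∀ i ∈ S, ∃ r : Fin R, bOuter 4 (v r) i = true := by
    intro i hi
    rw [hS, Finset.mem_filter] at hi
    have := hi.2
    rw [hv] at this
    exact (boolSup _).mp this
  choose f hf using hcov
  have hinj : Set.InjOn (fun i : {x // x ∈ S} => f i.1 i.2) Set.univ := by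
    rintro ⟨i, hi⟩ - ⟨i', hi'⟩ - h
    simp only at h
    by_contra hne
    have hne' : i ≠ i' := fun hh => hne (by simpa using hh)
    obtain ⟨j, hj⟩ : ∃ j, i j ≠ i' j := by
      by_contra hc; push_neg at hc; exact hne' (funext hc)
    -- the mixed point is also covered, hence in the support, contradiction
    have h1 := (bOuter_true_iff _ _).mp (hf i hi)
    have h2 := (bOuter_true_iff _ _).mp (hf i' hi')
    rw [h] at h1
    have hmix : bOuter 4 (v (f i' hi')) (Function.update i j (i' j)) = true := by
      rw [bOuter_true_iff]
      intro k
      by_cases hk : k = j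
      · subst hk; rw [Function.update_self]; exact h2 k
      · rw [Function.update_of_ne hk]; exact h1 k
    have hXmix : Xb (Function.update i j (i' j)) = true := by
      rw [hv]
      rw [boolSup]
      exact ⟨_, hmix⟩
    have hiS : Xb i = true := by
      rw [hS, Finset.mem_filter] at hi; exact hi.2
    have := Xb_flip i j (i' j) hiS (Ne.symm hj)
    rw [hXmix] at this
    exact Bool.noConfusion this
  have hcard : S.card ≤ R := by
    have h1 : Fintype.card {x // x ∈ S} ≤ Fintype.card (Fin R) := by
      have := Fintype.card_le_of_injective (fun i : {x // x ∈ S} => f i.1 i.2)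
        (fun a b hab => hinj (Set.mem_univ a) (Set.mem_univ b) hab)
      exact this
    simpa using h1
  rw [Xb_card] at hcard
  exact hcard
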